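/- Let Γ be a connected δ-regular graph on n vertices with diameter D = d (spectrally maximum diameter), distinct eigenvalues λ_0 > ... > λ_d, and π_0 = Π_{i=1}^d (λ_0 − λ_i). Then for every pair of vertices u,v at distance d and every ℓ ≥ 0, the number of walks (A^ℓ)_{uv} depends only on ℓ; in particular the number of walks of length d between vertices at distance d equals π_0/n. -/

import Mathlib

/-!
By the spectral theorem `Q = ∏ᵢ (X - λᵢ)` annihilates `A`. Writing `Q = (X - δ) P`, the matrix
`P(A)` satisfies `A P(A) = P(A) A = δ P(A)`, so its columns and rows are `δ`-eigenvectors of the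
connected regular graph and hence constant; comparing with `P(A) 𝟙 = P(δ) 𝟙 = π₀ 𝟙` makes every
entry equal to `π₀ / n`. When `dist u v = d`, all powers `A ^ k` with `k < d` vanish at `(u, v)`,
so the monic degree-`d` polynomial `P` gives `P(A) u v = (A ^ d) u v`, and reducing `X ^ ℓ`
modulo `Q` gives `(A ^ ℓ) u v = (X ^ ℓ %ₘ Q).coeff d · (A ^ d) u v`.
-/

open Matrix Polynomial Finset

theorem Matrix.IsHermitian.aeval_eq_zero_of_forall_isRoot {n 𝕜 : Type*} [Fintype n]
    [DecidableEq n] [RCLike 𝕜] {A : Matrix n n 𝕜} (hA : A.IsHermitian) {p : ℝ[X]}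
    (hp : ∀ μ ∈ spectrum ℝ A, p.IsRoot μ) : aeval A p = 0 := by
  rw [← cfc_polynomial p A hA.isSelfAdjoint, ← cfc_zero ℝ A]
  exact cfc_congr fun μ hμ => hp μ hμ

theorem Polynomial.isRoot_prod_X_sub_C_of_isRoot_prod_pow {ι R : Type*} [CommRing R] [IsDomain R]
    (s : Finset ι) (a : ι → R) (m : ι → ℕ) {x : R}
    (h : (∏ i ∈ s, (X - C (a i)) ^ m i).IsRoot x) : (∏ i ∈ s, (X - C (a i))).IsRoot x := by
  simp only [IsRoot, eval_prod, eval_pow, eval_sub, eval_X, eval_C, prod_eq_zero_iff] at h ⊢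
  obtain ⟨i, hi, hx⟩ := h
  exact ⟨i, hi, eq_zero_of_pow_eq_zero hx⟩

theorem Matrix.aeval_mulVec_of_mulVec_eq_smul {n R : Type*} [Fintype n] [DecidableEq n]
    [CommRing R] {A : Matrix n n R} {x : n → R} {μ : R} (h : A *ᵥ x = μ • x) (p : R[X]) :
    aeval A p *ᵥ x = p.eval μ • x := by
  by_cases hx : x = 0
  · simp [hx]
  have hv : Module.End.HasEigenvector (toLinAlgEquiv' A) μ x :=
    ⟨Module.End.mem_eigenspace_iff.mpr h, hx⟩
  rw [← toLinAlgEquiv'_apply, ← aeval_algHom_apply, Module.End.aeval_apply_of_hasEigenvector hv]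

namespace SimpleGraph

variable {V : Type*} [Fintype V] [DecidableEq V] (G : SimpleGraph V) [DecidableRel G.Adj]

theorem adjMatrix_pow_apply_eq_zero_of_lt_dist {R : Type*} [Semiring R] {k : ℕ} {u v : V}
    (hk : k < G.dist u v) : (G.adjMatrix R ^ k) u v = 0 := by
  have : IsEmpty {p : G.Walk u v | p.length = k} :=
    ⟨fun ⟨p, hp⟩ => (G.dist_le p).not_gt (hp ▸ hk)⟩
  rw [adjMatrix_pow_apply_eq_card_walk, Fintype.card_eq_zero, Nat.cast_zero]

theorem aeval_adjMatrix_apply_of_natDegree_le {R : Type*} [CommRing R] {p : R[X]} {u v : V}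
    (hp : p.natDegree ≤ G.dist u v) :
    aeval (G.adjMatrix R) p u v = p.coeff (G.dist u v) * (G.adjMatrix R ^ G.dist u v) u v := by
  rw [aeval_eq_sum_range' (Nat.lt_succ_of_le hp), Matrix.sum_apply, Finset.sum_range_succ,
    Finset.sum_eq_zero fun k hk => ?_, zero_add, Matrix.smul_apply, smul_eq_mul]
  rw [Matrix.smul_apply, G.adjMatrix_pow_apply_eq_zero_of_lt_dist (Finset.mem_range.mp hk),
    smul_zero]

variable {G} {δ : ℕ}

theorem eq_of_adjMatrix_mulVec_eq_smul (hreg : G.IsRegularOfDegree δ) (hconn : G.Connected)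
    {x : V → ℝ} (hx : G.adjMatrix ℝ *ᵥ x = (δ : ℝ) • x) (i j : V) : x i = x j := by
  have hlap : G.lapMatrix ℝ *ᵥ x = 0 := by
    ext v
    simp [lapMatrix, sub_mulVec, hx, degMatrix, mulVec_diagonal, hreg v]
  exact (lapMatrix_mulVec_eq_zero_iff_forall_reachable G).mp hlap i j (hconn.preconnected i j)

theorem apply_eq_of_adjMatrix_mul_eq_smul (hreg : G.IsRegularOfDegree δ) (hconn : G.Connected)
    {M : Matrix V V ℝ} (hAM : G.adjMatrix ℝ * M = (δ : ℝ) • M)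
    (hMA : M * G.adjMatrix ℝ = (δ : ℝ) • M) (u v u' v' : V) : M u v = M u' v' := by
  have hcol : ∀ N : Matrix V V ℝ, G.adjMatrix ℝ * N = (δ : ℝ) • N →
      ∀ u u' v, N u v = N u' v :=
    fun N hN u u' v => eq_of_adjMatrix_mulVec_eq_smul hreg hconn (x := fun w => N w v)
      (by ext w; simpa [mul_apply, mulVec, dotProduct] using congrFun₂ hN w v) u u'
  have hMt : G.adjMatrix ℝ * Mᵀ = (δ : ℝ) • Mᵀ := by
    rw [← transpose_adjMatrix, ← transpose_mul, hMA, transpose_smul]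
  calc M u v = M u' v := hcol M hAM u u' v
    _ = M u' v' := hcol Mᵀ hMt v v' u'

theorem aeval_adjMatrix_apply_eq_eval_div_card (hreg : G.IsRegularOfDegree δ)
    (hconn : G.Connected) {p : ℝ[X]} (hp : aeval (G.adjMatrix ℝ) ((X - C (δ : ℝ)) * p) = 0)
    (u v : V) : aeval (G.adjMatrix ℝ) p u v = p.eval (δ : ℝ) / Fintype.card V := by
  set B := aeval (G.adjMatrix ℝ) p
  have hAB : G.adjMatrix ℝ * B = (δ : ℝ) • B := by
    rwa [map_mul, map_sub, aeval_X, aeval_C, sub_mul, sub_eq_zero, ← Algebra.smul_def] at hp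
  have hBA : B * G.adjMatrix ℝ = (δ : ℝ) • B := by
    have hcomm : Commute (G.adjMatrix ℝ) B := by
      simpa using (Commute.all X p).map (aeval (G.adjMatrix ℝ))
    rw [← hcomm.eq, hAB]
  have hconst := apply_eq_of_adjMatrix_mul_eq_smul hreg hconn hAB hBA
  have hones : G.adjMatrix ℝ *ᵥ (fun _ => 1) = (δ : ℝ) • fun _ => 1 := by
    ext w; simp [hreg w]
  have hrow := congrFun (aeval_mulVec_of_mulVec_eq_smul hones p) u
  simp only [mulVec, dotProduct, mul_one, Pi.smul_apply, smul_eq_mul] at hrow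
  rw [Finset.sum_congr rfl fun w _ => hconst u w u v, sum_const, card_univ, nsmul_eq_mul] at hrow
  have : (Fintype.card V : ℝ) ≠ 0 := Nat.cast_ne_zero.mpr (Fintype.card_pos_iff.mpr ⟨u⟩).ne'
  rw [← hrow, mul_div_cancel_left₀ _ this]

theorem adjMatrix_pow_apply_eq_coeff_modByMonic_mul {R : Type*} [CommRing R] {Q : R[X]}
    {u v : V} (hQ : Q.Monic) (hQdeg : Q.natDegree = G.dist u v + 1)
    (hQA : aeval (G.adjMatrix R) Q = 0) (ℓ : ℕ) :
    (G.adjMatrix R ^ ℓ) u v =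
      (X ^ ℓ %ₘ Q).coeff (G.dist u v) * (G.adjMatrix R ^ G.dist u v) u v := by
  have hQ1 : Q ≠ 1 := by rintro rfl; simp at hQdeg
  have hdeg : (X ^ ℓ %ₘ Q).natDegree ≤ G.dist u v := by
    have := natDegree_modByMonic_lt (X ^ ℓ) hQ hQ1
    omega
  rw [← G.aeval_adjMatrix_apply_of_natDegree_le hdeg, aeval_modByMonic_eq_self_of_root hQA,
    map_pow, aeval_X]

end SimpleGraph

theorem stmt_16_general {V : Type*} [Fintype V] [DecidableEq V]
    (G : SimpleGraph V) [DecidableRel G.Adj]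
    (δ : ℕ) (hreg : G.IsRegularOfDegree δ) (hconn : G.Connected)
    (d : ℕ)
    (lam : Fin (d + 1) → ℝ) (hlam0 : lam 0 = δ)
    (m : Fin (d + 1) → ℕ)
    (hchar : Matrix.charpoly (G.adjMatrix ℝ) =
      ∏ i, (Polynomial.X - Polynomial.C (lam i)) ^ (m i))
    (n : ℕ) (hn : n = Fintype.card V)
    (π₀ : ℝ) (hπ₀ : π₀ = ∏ i : Fin d, (lam 0 - lam i.succ)) :
    (∀ (ℓ : ℕ) (u v u' v' : V), G.dist u v = d → G.dist u' v' = d →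
      ((G.adjMatrix ℝ) ^ ℓ) u v = ((G.adjMatrix ℝ) ^ ℓ) u' v') ∧
    (∀ u v : V, G.dist u v = d →
      ((G.adjMatrix ℝ) ^ d) u v = π₀ / (n : ℝ)) := by
  set P : ℝ[X] := ∏ i : Fin d, (X - C (lam i.succ)) with hP
  set Q : ℝ[X] := ∏ i, (X - C (lam i)) with hQ
  have hQP : Q = (X - C (δ : ℝ)) * P := by rw [hQ, hP, Fin.prod_univ_succ, hlam0]
  have hQA : aeval (G.adjMatrix ℝ) Q = 0 :=
    (G.isHermitian_adjMatrix ℝ).aeval_eq_zero_of_forall_isRoot fun μ hμ =>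
      isRoot_prod_X_sub_C_of_isRoot_prod_pow _ _ m
        (hchar ▸ mem_spectrum_iff_isRoot_charpoly.mp hμ)
  have hPmonic : P.Monic := monic_prod_X_sub_C _ _
  have hQmonic : Q.Monic := monic_prod_X_sub_C _ _
  have hPdeg : P.natDegree = d := by
    simp [hP, natDegree_prod_of_monic _ _ fun i _ => monic_X_sub_C (lam (Fin.succ i))]
  have hQdeg : Q.natDegree = d + 1 := by
    simp [hQ, natDegree_prod_of_monic _ _ fun i _ => monic_X_sub_C (lam i)]
  have hwalks : ∀ u v, G.dist u v = d → (G.adjMatrix ℝ ^ d) u v = π₀ / n := by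
    intro u v huv
    have hlead : P.coeff d = 1 := hPdeg ▸ hPmonic.coeff_natDegree
    calc (G.adjMatrix ℝ ^ d) u v = aeval (G.adjMatrix ℝ) P u v := by
          rw [G.aeval_adjMatrix_apply_of_natDegree_le (by omega), huv, hlead, one_mul]
      _ = P.eval (δ : ℝ) / Fintype.card V :=
          G.aeval_adjMatrix_apply_eq_eval_div_card hreg hconn (hQP ▸ hQA) u v
      _ = π₀ / n := by simp [hn, hπ₀, hP, eval_prod, hlam0]
  refine ⟨fun ℓ u v u' v' huv hu'v' => ?_, hwalks⟩
  have hpow : ∀ a b, G.dist a b = d →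
      (G.adjMatrix ℝ ^ ℓ) a b = (X ^ ℓ %ₘ Q).coeff d * (π₀ / n) := fun a b hab => by
    rw [G.adjMatrix_pow_apply_eq_coeff_modByMonic_mul hQmonic (by omega) hQA,
      hab, hwalks a b hab]
  rw [hpow u v huv, hpow u' v' hu'v']

/-- Let `Γ` be a connected `δ`-regular graph on `n` vertices with
spectrally maximum diameter `D = d`. Then for vertices `u, v` at distance `d`, the
number of walks `(A^ℓ)_{uv}` depends only on `ℓ`; in particular the number of walks of
length `d` between vertices at distance `d` equals `π₀/n`. -/
theorem stmt_16 {V : Type*} [Fintype V] [DecidableEq V]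
    (G : SimpleGraph V) [DecidableRel G.Adj]
    (δ : ℕ) (hreg : G.IsRegularOfDegree δ) (hconn : G.Connected)
    (D : ℕ) (hD1 : ∀ u v : V, G.dist u v ≤ D) (hD2 : ∃ u v : V, G.dist u v = D)
    (d : ℕ) (hDd : D = d)
    (lam : Fin (d + 1) → ℝ) (hlam : StrictAnti lam) (hlam0 : lam 0 = δ)
    (m : Fin (d + 1) → ℕ) (hmpos : ∀ i, 0 < m i)
    (hchar : Matrix.charpoly (G.adjMatrix ℝ) =
      ∏ i, (Polynomial.X - Polynomial.C (lam i)) ^ (m i))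
    (n : ℕ) (hn : n = Fintype.card V)
    (π₀ : ℝ) (hπ₀ : π₀ = ∏ i : Fin d, (lam 0 - lam i.succ)) :
    (∀ (ℓ : ℕ) (u v u' v' : V), G.dist u v = d → G.dist u' v' = d →
      ((G.adjMatrix ℝ) ^ ℓ) u v = ((G.adjMatrix ℝ) ^ ℓ) u' v') ∧
    (∀ u v : V, G.dist u v = d →
      ((G.adjMatrix ℝ) ^ d) u v = π₀ / (n : ℝ)) :=
  stmt_16_general G δ hreg hconn d lam hlam0 m hchar n hn π₀ hπ₀
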